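/- arXiv:1202.6545 — 2 statements merged into one kernel-verified Lean document; each statement's English description precedes it below -/
import Mathlib

section
/- In a hidden Markov tree model, for every nonempty subset V of the vertex set that induces a subtree (i.e. V is connected in the tree), the entropy of the corresponding state subprocess decomposes as H(S̄_V | X = x) = Σ_{v∈V} H(S_v | S_{ρ(v)}, X = x), where the term for a vertex v that is the root of the tree or whose parent ρ(v) does not belong to V is read as H(S_v | X = x). -/
/-- A hidden Markov tree (HMT) model on a finite rooted tree with `n` vertices:
the root is `0` and the vertices are indexed in a topological order, i.e. every
non-root vertex has a parent with strictly smaller index.  The model has `J`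
states and observation alphabet `{0, …, V-1}`, with initial probabilities (for
the root), transition probabilities and emission probabilities. -/
structure HMTModel (J V n : ℕ) [NeZero n] where
  parent : Fin n → Fin n
  parent_lt : ∀ u : Fin n, u ≠ 0 → parent u < u
  init : Fin J → ℝ
  trans : Fin J → Fin J → ℝ
  emit : Fin J → Fin V → ℝ
  init_nonneg : ∀ j, 0 ≤ init j
  init_sum : ∑ j, init j = 1
  trans_nonneg : ∀ i j, 0 ≤ trans i j
  trans_sum : ∀ i, ∑ j, trans i j = 1
  emit_nonneg : ∀ j y, 0 ≤ emit j y
  emit_sum : ∀ j, ∑ y, emit j y = 1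

namespace HMTModel

variable {J V n : ℕ} [NeZero J] [NeZero n]

/-- The joint law of the state tree and the observed tree:
`P(S = s, X = x) = π_{s_0} (∏_{u ≠ 0} p_{s_{ρ(u)} s_u}) ∏_u b_{s_u}(x_u)`. -/
noncomputable def joint (M : HMTModel J V n) (s : Fin n → Fin J) (x : Fin n → Fin V) : ℝ :=
  M.init (s 0) *
    (∏ u ∈ Finset.univ.filter (fun u : Fin n => u ≠ 0), M.trans (s (M.parent u)) (s u)) *
    ∏ u : Fin n, M.emit (s u) (x u)

open Classical in
/-- Probability of an event on (state tree, observed tree). -/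
noncomputable def pr (M : HMTModel J V n)
    (E : (Fin n → Fin J) → (Fin n → Fin V) → Prop) : ℝ :=
  ∑ s : Fin n → Fin J, ∑ y : Fin n → Fin V, if E s y then M.joint s y else 0

/-- Conditional probability `P(A | B)`; it is `0` when the conditioning event
has probability zero. -/
noncomputable def cpr (M : HMTModel J V n)
    (A B : (Fin n → Fin J) → (Fin n → Fin V) → Prop) : ℝ :=
  if 0 < M.pr B then M.pr (fun s y => A s y ∧ B s y) / M.pr B else 0

/-- Entropy of the random vector `f(S)` given the event `E`
(natural logarithm, with the convention `0 log 0 = 0`). -/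
noncomputable def condEnt (M : HMTModel J V n) {α : Type*} [Fintype α]
    (f : (Fin n → Fin J) → α)
    (E : (Fin n → Fin J) → (Fin n → Fin V) → Prop) : ℝ :=
  -∑ a : α, M.cpr (fun s _ => f s = a) E * Real.log (M.cpr (fun s _ => f s = a) E)

/-- Entropy of `f(S)` given the random vector `g(S)` and the event `E`:
`H(f(S) | g(S), E) = ∑_c P(g(S) = c | E) H(f(S) | g(S) = c, E)`. -/
noncomputable def condEntGiven (M : HMTModel J V n) {α β : Type*} [Fintype α] [Fintype β]
    (f : (Fin n → Fin J) → α) (g : (Fin n → Fin J) → β)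
    (E : (Fin n → Fin J) → (Fin n → Fin V) → Prop) : ℝ :=
  ∑ c : β, M.cpr (fun s _ => g s = c) E * M.condEnt f (fun s y => g s = c ∧ E s y)

/-- The event `X = x`. -/
def obsEq (x : Fin n → Fin V) : (Fin n → Fin J) → (Fin n → Fin V) → Prop :=
  fun _ y => y = x

/-- `v` belongs to the complete subtree rooted at `u` (i.e. `u` is obtained
from `v` by repeatedly taking parents). -/
def inSubtree (M : HMTModel J V n) (u v : Fin n) : Prop :=
  Relation.ReflTransGen (fun a b : Fin n => a ≠ 0 ∧ M.parent a = b) v u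

open Classical in
/-- The state subtree `S̄_u` rooted at `u` (coordinates outside the subtree
are padded by `0`). -/
noncomputable def subVar (M : HMTModel J V n) (u : Fin n) (s : Fin n → Fin J) :
    Fin n → Fin J :=
  fun v => if M.inSubtree u v then s v else 0

open Classical in
/-- The collection `S̄_{c(u)}` of state subtrees rooted at the children of `u`
(all other coordinates padded by `0`). -/
noncomputable def childSubVar (M : HMTModel J V n) (u : Fin n) (s : Fin n → Fin J) :
    Fin n → Fin J :=
  fun v => if M.inSubtree u v ∧ v ≠ u then s v else 0

/-- The states `S_{c(u)}` of the children of `u` (all other coordinates padded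
by `0`). -/
def childVar (M : HMTModel J V n) (u : Fin n) (s : Fin n → Fin J) :
    Fin n → Fin J :=
  fun v => if v ≠ 0 ∧ M.parent v = u then s v else 0

/-- The states `(S_v)_{v ∈ Vs}` of a subset `Vs` of vertices (all other
coordinates padded by `0`). -/
def memVar (_M : HMTModel J V n) (Vs : Finset (Fin n)) (s : Fin n → Fin J) :
    Fin n → Fin J :=
  fun v => if v ∈ Vs then s v else 0

end HMTModel

open HMTModel

/-!
Because the vertices are numbered topologically and `Vs` is connected, every vertex of `Vs`
other than its least one has its parent in `Vs`. Adding the vertices of `Vs` in increasing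
order, the chain rule splits off `H(S_m | S̄_W, X = x)` for the new vertex `m` and the set `W`
of the earlier ones, all of which lie outside the subtree rooted at `m`. Given `X = x`, the
joint law is the product of a factor depending only on the states in that subtree and on
`S_{ρ(m)}`, and a factor depending only on the states outside it. So `S_m` is conditionally
independent of `S̄_W` given `S_{ρ(m)}`, which is one of the coordinates of `S̄_W`, and the
term reduces to `H(S_m | S_{ρ(m)}, X = x)`.
-/

namespace HMTModel

open Finset Real

abbrev Event (J V n : ℕ) := (Fin n → Fin J) → (Fin n → Fin V) → Prop

def DependsOn {J n : ℕ} (p : Fin n → Prop) (P : (Fin n → Fin J) → Prop) : Prop :=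
  ∀ s s' : Fin n → Fin J, (∀ v, p v → s v = s' v) → (P s ↔ P s')

variable {J V n : ℕ} [NeZero n] (M : HMTModel J V n)

section Probability

variable {E F : Event J V n}

theorem joint_nonneg (s : Fin n → Fin J) (x : Fin n → Fin V) : 0 ≤ M.joint s x :=
  mul_nonneg (mul_nonneg (M.init_nonneg _) (prod_nonneg fun _ _ => M.trans_nonneg _ _))
    (prod_nonneg fun _ _ => M.emit_nonneg _ _)

theorem pr_nonneg (E : Event J V n) : 0 ≤ M.pr E :=
  sum_nonneg fun s _ => sum_nonneg fun y _ => by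
    split_ifs
    exacts [M.joint_nonneg s y, le_rfl]

theorem pr_congr (h : ∀ s y, E s y ↔ F s y) : M.pr E = M.pr F := by
  obtain rfl : E = F := funext fun s => funext fun y => propext (h s y)
  rfl

theorem pr_mono (h : ∀ s y, E s y → F s y) : M.pr E ≤ M.pr F :=
  sum_le_sum fun s _ => sum_le_sum fun y _ => by
    split_ifs with hE hF
    · exact le_rfl
    · exact absurd (h s y hE) hF
    · exact M.joint_nonneg s y
    · exact le_rfl

theorem pr_eq_zero_of_imp (h : ∀ s y, E s y → F s y) (hF : M.pr F = 0) : M.pr E = 0 :=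
  le_antisymm (hF ▸ M.pr_mono h) (M.pr_nonneg E)

theorem sum_pr_fiber {β γ : Type*} [Fintype β] [DecidableEq γ] (g : (Fin n → Fin J) → β)
    (φ : β → γ) (c : γ) (E : Event J V n) :
    ∑ b with φ b = c, M.pr (fun s y => g s = b ∧ E s y) =
      M.pr (fun s y => φ (g s) = c ∧ E s y) := by
  classical
  unfold pr
  rw [sum_comm]
  refine sum_congr rfl fun s _ => ?_
  rw [sum_comm]
  refine sum_congr rfl fun y _ => ?_
  by_cases hE : E s y <;> simp [hE]

theorem sum_pr_and {β : Type*} [Fintype β] (g : (Fin n → Fin J) → β) (E : Event J V n) :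
    ∑ b, M.pr (fun s y => g s = b ∧ E s y) = M.pr E := by
  simpa using M.sum_pr_fiber g (fun _ => ()) () E

theorem cpr_of_pos {A B : Event J V n} (hB : 0 < M.pr B) :
    M.cpr A B = M.pr (fun s y => A s y ∧ B s y) / M.pr B :=
  if_pos hB

theorem cpr_of_not_pos {A B : Event J V n} (hB : ¬ 0 < M.pr B) : M.cpr A B = 0 :=
  if_neg hB

theorem cpr_congr {A A' B B' : Event J V n} (hA : ∀ s y, A s y ∧ B s y ↔ A' s y ∧ B' s y)
    (hB : ∀ s y, B s y ↔ B' s y) : M.cpr A B = M.cpr A' B' := by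
  unfold cpr
  rw [M.pr_congr hB, M.pr_congr hA]

theorem pr_and_pos_of_cpr_ne_zero {A B : Event J V n} (h : M.cpr A B ≠ 0) :
    0 < M.pr (fun s y => A s y ∧ B s y) := by
  by_cases hB : 0 < M.pr B
  · rw [M.cpr_of_pos hB] at h
    exact (M.pr_nonneg _).lt_of_ne' (left_ne_zero_of_mul h)
  · exact absurd (M.cpr_of_not_pos hB) h

theorem cpr_and {A A' B : Event J V n} :
    M.cpr (fun s y => A s y ∧ A' s y) B =
      M.cpr A B * M.cpr A' (fun s y => A s y ∧ B s y) := by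
  by_cases hB : 0 < M.pr B
  · by_cases hAB : 0 < M.pr (fun s y => A s y ∧ B s y)
    · rw [M.cpr_of_pos hB, M.cpr_of_pos hB, M.cpr_of_pos hAB,
        M.pr_congr (F := fun s y => A' s y ∧ A s y ∧ B s y) fun s y => by tauto]
      field_simp
    · have hAB0 := le_antisymm (not_lt.mp hAB) (M.pr_nonneg _)
      rw [M.cpr_of_pos hB, M.cpr_of_pos hB, hAB0, zero_div, zero_mul,
        M.pr_eq_zero_of_imp (fun s y h => ⟨h.1.1, h.2⟩) hAB0, zero_div]
  · rw [M.cpr_of_not_pos hB, M.cpr_of_not_pos hB, zero_mul]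

theorem cpr_eq_zero_of_forall_not {A B : Event J V n} (h : ∀ s y, B s y → ¬ A s y) :
    M.cpr A B = 0 := by
  by_cases hB : 0 < M.pr B
  · rw [M.cpr_of_pos hB, M.pr_eq_zero_of_imp (F := fun _ _ => False)
      (fun s y hAB => h s y hAB.2 hAB.1) (by simp [pr]), zero_div]
  · exact M.cpr_of_not_pos hB

theorem sum_cpr_fiber {β γ : Type*} [Fintype β] [DecidableEq γ] (g : (Fin n → Fin J) → β)
    (φ : β → γ) (c : γ) (E : Event J V n) :
    ∑ b with φ b = c, M.cpr (fun s _ => g s = b) E = M.cpr (fun s _ => φ (g s) = c) E := by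
  by_cases hE : 0 < M.pr E
  · simp only [M.cpr_of_pos hE, ← sum_div, M.sum_pr_fiber]
  · simp only [M.cpr_of_not_pos hE, sum_const_zero]

theorem sum_cpr_eq_one {β : Type*} [Fintype β] (g : (Fin n → Fin J) → β) {E : Event J V n}
    (hE : 0 < M.pr E) : ∑ b, M.cpr (fun s _ => g s = b) E = 1 := by
  rw [sum_congr rfl fun b _ => M.cpr_of_pos hE, ← sum_div, M.sum_pr_and, div_self hE.ne']

end Probability

section Entropy

variable {α β γ : Type*} [Fintype α] [Fintype β] [Fintype γ]

theorem condEnt_comp_of_injective (f : (Fin n → Fin J) → α) {e : α → β}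
    (he : Function.Injective e) (E : Event J V n) :
    M.condEnt (fun s => e (f s)) E = M.condEnt f E := by
  unfold condEnt
  congr 1
  refine (Fintype.sum_of_injective e he _ _ (fun b hb => ?_) fun a => ?_).symm
  · rw [M.cpr_eq_zero_of_forall_not fun s _ _ hs => hb ⟨f s, hs⟩, zero_mul]
  · rw [M.cpr_congr (A' := fun s _ => e (f s) = e a) (fun s y => by rw [he.eq_iff])
      fun _ _ => .rfl]

theorem condEnt_eq_sum_negMulLog (f : (Fin n → Fin J) → α) (E : Event J V n) :
    M.condEnt f E = ∑ a, negMulLog (M.cpr (fun s _ => f s = a) E) := by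
  simp [condEnt, negMulLog_eq_neg, sum_neg_distrib]

theorem condEnt_const (c : α) (E : Event J V n) : M.condEnt (fun _ => c) E = 0 := by
  rw [condEnt_eq_sum_negMulLog]
  refine sum_eq_zero fun a _ => ?_
  by_cases hca : c = a
  · by_cases hE : 0 < M.pr E
    · simp only [hca, true_and, M.cpr_of_pos hE, div_self hE.ne', negMulLog_one]
    · rw [M.cpr_of_not_pos hE, negMulLog_zero]
  · rw [M.cpr_eq_zero_of_forall_not fun _ _ _ => hca, negMulLog_zero]

theorem condEnt_prod (f : (Fin n → Fin J) → α) (g : (Fin n → Fin J) → β)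
    (E : Event J V n) :
    M.condEnt (fun s => (f s, g s)) E = M.condEnt g E + M.condEntGiven f g E := by
  set P : β → ℝ := fun b => M.cpr (fun s _ => g s = b) E
  set Q : α → β → ℝ := fun a b => M.cpr (fun s _ => f s = a) (fun s y => g s = b ∧ E s y)
  have hmul : ∀ a b, M.cpr (fun s _ => (f s, g s) = (a, b)) E = P b * Q a b := fun a b =>
    (M.cpr_congr (fun s y => by rw [Prod.ext_iff, and_comm (a := f s = a)]) fun _ _ => .rfl).trans
      M.cpr_and
  have hsumQ : ∀ b, (∑ a, Q a b) * negMulLog (P b) = negMulLog (P b) := by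
    intro b
    by_cases hb : P b = 0
    · simp [hb]
    · rw [M.sum_cpr_eq_one f (M.pr_and_pos_of_cpr_ne_zero hb), one_mul]
  simp only [condEntGiven, condEnt_eq_sum_negMulLog, Fintype.sum_prod_type, hmul, negMulLog_mul]
  rw [sum_comm, ← sum_add_distrib]
  refine sum_congr rfl fun b _ => ?_
  rw [sum_add_distrib, ← sum_mul, hsumQ, mul_sum]

theorem condEntGiven_eq_of_condIndep (f : (Fin n → Fin J) → α) {g : (Fin n → Fin J) → β}
    {h : (Fin n → Fin J) → γ} (φ : β → γ) (hφ : ∀ s, h s = φ (g s)) {E : Event J V n}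
    (hind : ∀ b a, 0 < M.pr (fun s y => g s = b ∧ E s y) →
      M.cpr (fun s _ => f s = a) (fun s y => g s = b ∧ E s y) =
        M.cpr (fun s _ => f s = a) (fun s y => h s = φ b ∧ E s y)) :
    M.condEntGiven f g E = M.condEntGiven f h E := by
  classical
  have hterm : ∀ b, M.cpr (fun s _ => g s = b) E * M.condEnt f (fun s y => g s = b ∧ E s y) =
      M.cpr (fun s _ => g s = b) E * M.condEnt f (fun s y => h s = φ b ∧ E s y) := by
    intro b
    by_cases hb : M.cpr (fun s _ => g s = b) E = 0
    · rw [hb, zero_mul, zero_mul]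
    · simp only [condEnt, hind b _ (M.pr_and_pos_of_cpr_ne_zero hb)]
  unfold condEntGiven
  rw [sum_congr rfl fun b _ => hterm b, ← sum_fiberwise univ φ]
  refine sum_congr rfl fun c _ => ?_
  rw [sum_congr rfl fun b hb => by rw [(mem_filter.mp hb).2], ← sum_mul]
  congr 1
  convert M.sum_cpr_fiber g φ c E using 1
  simp only [hφ]

end Entropy

section Tree

theorem le_of_inSubtree {u v : Fin n} (h : M.inSubtree u v) : u ≤ v := by
  induction h with
  | refl => exact le_rfl
  | tail _ hstep ih => exact (hstep.2 ▸ M.parent_lt _ hstep.1).le.trans ih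

theorem inSubtree_of_parent {u v : Fin n} (hv : v ≠ 0) (h : M.inSubtree u (M.parent v)) :
    M.inSubtree u v :=
  .head ⟨hv, rfl⟩ h

theorem inSubtree_parent_of_ne {u v : Fin n} (h : M.inSubtree u v) (hvu : v ≠ u) :
    v ≠ 0 ∧ M.inSubtree u (M.parent v) := by
  rcases Relation.ReflTransGen.cases_head h with rfl | ⟨w, ⟨hv, rfl⟩, hw⟩
  · exact absurd rfl hvu
  · exact ⟨hv, hw⟩

theorem not_inSubtree_zero {u : Fin n} (hu : u ≠ 0) : ¬ M.inSubtree u 0 :=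
  fun h => hu (le_antisymm (M.le_of_inSubtree h) (Fin.zero_le u))

theorem not_inSubtree_parent {u : Fin n} (hu : u ≠ 0) : ¬ M.inSubtree u (M.parent u) :=
  fun h => (M.le_of_inSubtree h).not_gt (M.parent_lt u hu)

def AdjWithin (Vs : Finset (Fin n)) (u v : Fin n) : Prop :=
  u ∈ Vs ∧ v ∈ Vs ∧ ((u ≠ 0 ∧ M.parent u = v) ∨ (v ≠ 0 ∧ M.parent v = u))

theorem inSubtree_of_reflTransGen_adjWithin {Vs : Finset (Fin n)} {v w : Fin n}
    (hv : M.parent v ∉ Vs) (h : Relation.ReflTransGen (M.AdjWithin Vs) v w) :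
    M.inSubtree v w := by
  induction h with
  | refl => exact .refl
  | @tail b c _ hbc ih =>
    obtain ⟨-, hc, ⟨hb0, rfl⟩ | ⟨hc0, rfl⟩⟩ := hbc
    · have hbv : b ≠ v := by rintro rfl; exact hv hc
      exact (M.inSubtree_parent_of_ne ih hbv).2
    · exact M.inSubtree_of_parent hc0 ih

def IsSubtree (Vs : Finset (Fin n)) : Prop :=
  ∀ v ∈ Vs, ∀ w ∈ Vs, w < v → M.parent v ∈ Vs

theorem isSubtree_of_connected {Vs : Finset (Fin n)}
    (hconn : ∀ a ∈ Vs, ∀ b ∈ Vs, Relation.ReflTransGen (M.AdjWithin Vs) a b) :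
    M.IsSubtree Vs := fun v hv w hw hwv => by
  by_contra hp
  exact (M.le_of_inSubtree (M.inSubtree_of_reflTransGen_adjWithin hp (hconn v hv w hw))).not_gt hwv

theorem IsSubtree.of_insert {a : Fin n} {W : Finset (Fin n)} (hlt : ∀ v ∈ W, v < a)
    (h : M.IsSubtree (insert a W)) : M.IsSubtree W := fun v hv w hw hwv => by
  have hpv : M.parent v < a := (M.parent_lt v (ne_zero_of_lt hwv)).trans (hlt v hv)
  simpa [hpv.ne] using h v (mem_insert_of_mem hv) w (mem_insert_of_mem hw) hwv

end Tree

section Factorization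

variable (x : Fin n → Fin V) (m : Fin n)

open Classical in
noncomputable def subtreeWeight (s : Fin n → Fin J) : ℝ :=
  ∏ u with M.inSubtree m u, M.trans (s (M.parent u)) (s u) * M.emit (s u) (x u)

open Classical in
noncomputable def outsideWeight (s : Fin n → Fin J) : ℝ :=
  M.init (s 0) * (∏ u with u ≠ 0 ∧ ¬ M.inSubtree m u, M.trans (s (M.parent u)) (s u)) *
    ∏ u with ¬ M.inSubtree m u, M.emit (s u) (x u)

variable {m}

theorem joint_eq_outsideWeight_mul_subtreeWeight (hm : m ≠ 0) (s : Fin n → Fin J) :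
    M.joint s x = M.outsideWeight x m s * M.subtreeWeight x m s := by
  classical
  have hsub : univ.filter (fun u => u ≠ 0 ∧ M.inSubtree m u) = univ.filter (M.inSubtree m) :=
    filter_congr fun u _ => and_iff_right_of_imp <| by
      rintro hu rfl
      exact M.not_inSubtree_zero hm hu
  unfold joint outsideWeight subtreeWeight
  rw [← prod_filter_mul_prod_filter_not univ (M.inSubtree m) (fun u => M.emit (s u) (x u)),
    ← prod_filter_mul_prod_filter_not {u | u ≠ 0} (M.inSubtree m), filter_filter, filter_filter,
    hsub, prod_mul_distrib]
  ring

variable {x}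

theorem subtreeWeight_congr {s s' : Fin n → Fin J} (h : ∀ v, M.inSubtree m v → s v = s' v)
    (hρ : s (M.parent m) = s' (M.parent m)) : M.subtreeWeight x m s = M.subtreeWeight x m s' := by
  classical
  unfold subtreeWeight
  refine prod_congr rfl fun u hu => ?_
  have hu : M.inSubtree m u := (mem_filter.mp hu).2
  have hρu : s (M.parent u) = s' (M.parent u) := by
    by_cases hum : u = m
    · rwa [hum]
    · exact h _ (M.inSubtree_parent_of_ne hu hum).2
  rw [h u hu, hρu]

theorem outsideWeight_congr (hm : m ≠ 0) {s s' : Fin n → Fin J}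
    (h : ∀ v, ¬ M.inSubtree m v → s v = s' v) :
    M.outsideWeight x m s = M.outsideWeight x m s' := by
  classical
  unfold outsideWeight
  rw [h 0 (M.not_inSubtree_zero hm)]
  congr 1
  · refine congrArg _ (prod_congr rfl fun u hu => ?_)
    obtain ⟨hu0, hu⟩ := (mem_filter.mp hu).2
    rw [h u hu, h _ (mt (M.inSubtree_of_parent hu0) hu)]
  · exact prod_congr rfl fun u hu => by rw [h u (mem_filter.mp hu).2]

variable (x) in
open Classical in
noncomputable def prObs (R : (Fin n → Fin J) → Prop) : ℝ :=
  ∑ s, if R s then M.joint s x else 0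

variable (x) in
theorem pr_and_obsEq (R : (Fin n → Fin J) → Prop) :
    M.pr (fun s y => R s ∧ obsEq x s y) = M.prObs x R := by
  unfold pr prObs
  refine sum_congr rfl fun s _ => ?_
  by_cases hR : R s <;> simp [hR, obsEq]

theorem exists_prObs_and_eq_mul (hm : m ≠ 0) (k : Fin J) :
    ∃ F G : ((Fin n → Fin J) → Prop) → ℝ, ∀ P Q, DependsOn (M.inSubtree m) P →
      DependsOn (fun v => ¬ M.inSubtree m v) Q → (∀ s, Q s → s (M.parent m) = k) →
        M.prObs x (fun s => P s ∧ Q s) = F P * G Q := by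
  classical
  -- Filling the subtree factor with `k` outside the subtree is harmless, as `Q` forces
  -- `s (ρ m) = k` and the subtree factor sees no other outside coordinate.
  let e := Equiv.piEquivPiSubtypeProd (M.inSubtree m) (fun _ => Fin J)
  refine ⟨fun P => ∑ w, if P (e.symm (w, fun _ => k))
      then M.subtreeWeight x m (e.symm (w, fun _ => k)) else 0,
    fun Q => ∑ u, if Q (e.symm (fun _ => k, u))
      then M.outsideWeight x m (e.symm (fun _ => k, u)) else 0,
    fun P Q hP hQ hk => ?_⟩
  rw [sum_mul_sum, ← Fintype.sum_prod_type']
  refine Fintype.sum_equiv e _ _ fun s => ?_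
  have hin : ∀ v, M.inSubtree m v → s v = e.symm ((e s).1, fun _ => k) v := fun v hv => by
    simp [e, Equiv.piEquivPiSubtypeProd_symm_apply, hv]
  have hout : ∀ v, ¬ M.inSubtree m v → s v = e.symm (fun _ => k, (e s).2) v := fun v hv => by
    simp [e, Equiv.piEquivPiSubtypeProd_symm_apply, hv]
  by_cases hPs : P s
  · by_cases hQs : Q s
    · rw [if_pos ⟨hPs, hQs⟩, if_pos ((hP _ _ hin).1 hPs), if_pos ((hQ _ _ hout).1 hQs),
        M.joint_eq_outsideWeight_mul_subtreeWeight x hm, mul_comm,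
        M.subtreeWeight_congr hin, M.outsideWeight_congr hm hout]
      rw [hk s hQs]
      simp [e, Equiv.piEquivPiSubtypeProd_symm_apply, M.not_inSubtree_parent hm]
    · rw [if_neg fun h => hQs h.2, if_neg (mt (hQ _ _ hout).2 hQs), mul_zero]
  · rw [if_neg fun h => hPs h.1, if_neg (mt (hP _ _ hin).2 hPs), zero_mul]

theorem prObs_mul_prObs_swap (hm : m ≠ 0) {k : Fin J} {P P' Q Q' : (Fin n → Fin J) → Prop}
    (hP : DependsOn (M.inSubtree m) P) (hP' : DependsOn (M.inSubtree m) P')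
    (hQ : DependsOn (fun v => ¬ M.inSubtree m v) Q)
    (hQ' : DependsOn (fun v => ¬ M.inSubtree m v) Q')
    (hk : ∀ s, Q s → s (M.parent m) = k) (hk' : ∀ s, Q' s → s (M.parent m) = k) :
    M.prObs x (fun s => P s ∧ Q s) * M.prObs x (fun s => P' s ∧ Q' s) =
      M.prObs x (fun s => P s ∧ Q' s) * M.prObs x (fun s => P' s ∧ Q s) := by
  obtain ⟨F, G, hFG⟩ := M.exists_prObs_and_eq_mul (x := x) hm k
  rw [hFG P Q hP hQ hk, hFG P' Q' hP' hQ' hk', hFG P Q' hP hQ' hk', hFG P' Q hP' hQ hk]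
  ring

theorem cpr_eq_cpr_parent (hm : m ≠ 0) {k : Fin J} {Q : (Fin n → Fin J) → Prop}
    (hQ : DependsOn (fun v => ¬ M.inSubtree m v) Q) (hk : ∀ s, Q s → s (M.parent m) = k)
    (hpos : 0 < M.pr (fun s y => Q s ∧ obsEq x s y)) (j : Fin J) :
    M.cpr (fun s _ => s m = j) (fun s y => Q s ∧ obsEq x s y) =
      M.cpr (fun s _ => s m = j) (fun s y => s (M.parent m) = k ∧ obsEq x s y) := by
  have hpos' : 0 < M.pr (fun s y => s (M.parent m) = k ∧ obsEq x s y) :=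
    hpos.trans_le (M.pr_mono fun s y h => ⟨hk s h.1, h.2⟩)
  have hassoc : ∀ R : (Fin n → Fin J) → Prop,
      M.pr (fun s y => s m = j ∧ R s ∧ obsEq x s y) = M.prObs x (fun s => s m = j ∧ R s) :=
    fun R => (M.pr_congr fun s y => and_assoc.symm).trans (M.pr_and_obsEq x _)
  rw [M.cpr_of_pos hpos, M.cpr_of_pos hpos', div_eq_div_iff hpos.ne' hpos'.ne', hassoc, hassoc,
    M.pr_and_obsEq, M.pr_and_obsEq]
  simpa using M.prObs_mul_prObs_swap hm (P := fun s => s m = j) (P' := fun _ => True)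
    (fun s s' h => by simp only [h m .refl]) (fun _ _ _ => .rfl) hQ
    (fun s s' h => by simp only [h _ (M.not_inSubtree_parent hm)]) hk fun _ => id

theorem condEntGiven_memVar_eq_condEntGiven_parent [NeZero J] (hm : m ≠ 0)
    {W : Finset (Fin n)} (hW : ∀ v ∈ W, ¬ M.inSubtree m v) (hρ : M.parent m ∈ W) :
    M.condEntGiven (fun s => s m) (M.memVar W) (obsEq x) =
      M.condEntGiven (fun s => s m) (fun s => s (M.parent m)) (obsEq x) := by
  have hρs : ∀ s, s (M.parent m) = M.memVar W s (M.parent m) := fun s => (if_pos hρ).symm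
  refine M.condEntGiven_eq_of_condIndep _ (fun c => c (M.parent m)) hρs fun c j hc =>
    M.cpr_eq_cpr_parent hm (fun s s' h => ?_) (fun s hs => (hρs s).trans (congrFun hs _)) hc j
  have hWs : M.memVar W s = M.memVar W s' := funext fun v => by
    by_cases hv : v ∈ W
    · simp only [memVar, hv, if_true, h v (hW v hv)]
    · simp only [memVar, hv, if_false]
  rw [hWs]

end Factorization

section Decomposition

variable [NeZero J]

theorem condEnt_memVar_insert {a : Fin n} {W : Finset (Fin n)} (ha : a ∉ W) (E : Event J V n) :
    M.condEnt (M.memVar (insert a W)) E = M.condEnt (fun s => (s a, M.memVar W s)) E := by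
  have hinj : Function.Injective fun c : Fin n → Fin J => (c a, Function.update c a 0) := by
    intro c c' h
    obtain ⟨h1, h2⟩ := Prod.mk.inj h
    funext v
    by_cases hv : v = a
    · rw [hv, h1]
    · simpa [hv] using congrFun h2 v
  have hpair : ∀ s, (M.memVar (insert a W) s a, Function.update (M.memVar (insert a W) s) a 0) =
      (s a, M.memVar W s) := by
    refine fun s => Prod.ext (by simp [memVar]) (funext fun v => ?_)
    by_cases hv : v = a
    · simp [memVar, hv, ha]
    · simp [memVar, hv]
  simp only [← hpair]
  exact (M.condEnt_comp_of_injective _ hinj E).symm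

variable (x : Fin n → Fin V)

theorem condEnt_memVar_eq_sum {Vs : Finset (Fin n)} (hVs : M.IsSubtree Vs) :
    M.condEnt (M.memVar Vs) (obsEq x) =
      ∑ v ∈ Vs, if v = 0 ∨ M.parent v ∉ Vs then M.condEnt (fun s => s v) (obsEq x)
        else M.condEntGiven (fun s => s v) (fun s => s (M.parent v)) (obsEq x) := by
  induction Vs using Finset.induction_on_max with
  | empty =>
    have hconst : M.memVar ∅ = fun _ => 0 :=
      funext fun s => funext fun v => if_neg (notMem_empty v)
    rw [hconst, condEnt_const, sum_empty]
  | insert a W hlt ih =>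
    have haW : a ∉ W := fun h => (hlt a h).false
    rcases W.eq_empty_or_nonempty with rfl | ⟨w, hw⟩
    · have hsingle : M.memVar {a} = fun s => Pi.single a (s a) :=
        funext fun s => funext fun v => by by_cases hv : v = a <;> simp [memVar, hv]
      have hroot : a = 0 ∨ M.parent a ∉ ({a} : Finset (Fin n)) := by
        by_cases ha : a = 0
        · exact .inl ha
        · exact .inr (by simpa using (M.parent_lt a ha).ne)
      rw [insert_empty, hsingle, M.condEnt_comp_of_injective _ (Pi.single_injective a),
        sum_singleton, if_pos hroot]
    · have ha0 : a ≠ 0 := ne_zero_of_lt (hlt w hw)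
      have hρa : M.parent a ∈ W := by
        simpa [(M.parent_lt a ha0).ne] using
          hVs a (mem_insert_self a W) w (mem_insert_of_mem hw) (hlt w hw)
      have hsubtree : ∀ v ∈ W, ¬ M.inSubtree a v := fun v hv h =>
        (M.le_of_inSubtree h).not_gt (hlt v hv)
      rw [M.condEnt_memVar_insert haW, condEnt_prod, ih (hVs.of_insert M hlt),
        M.condEntGiven_memVar_eq_condEntGiven_parent ha0 hsubtree hρa, sum_insert haW,
        if_neg (by simp [ha0, hρa]), add_comm]
      refine congrArg _ (sum_congr rfl fun v hv => ?_)
      by_cases hv0 : v = 0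
      · simp [hv0]
      · simp [hv0, ((M.parent_lt v hv0).trans (hlt v hv)).ne]

end Decomposition

end HMTModel

theorem hmt_induced_subtree_entropy_decomposition_general
    {J V n : ℕ} [NeZero J] [NeZero n] (M : HMTModel J V n)
    (x : Fin n → Fin V)
    (Vs : Finset (Fin n))
    (hconn : ∀ a ∈ Vs, ∀ b ∈ Vs, Relation.ReflTransGen
        (fun u v : Fin n => u ∈ Vs ∧ v ∈ Vs ∧
          ((u ≠ 0 ∧ M.parent u = v) ∨ (v ≠ 0 ∧ M.parent v = u))) a b) :
    M.condEnt (M.memVar Vs) (obsEq x)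
      = ∑ v ∈ Vs,
          if v = 0 ∨ M.parent v ∉ Vs
          then M.condEnt (fun s => s v) (obsEq x)
          else M.condEntGiven (fun s => s v) (fun s => s (M.parent v)) (obsEq x) :=
  M.condEnt_memVar_eq_sum x (M.isSubtree_of_connected hconn)

/-- In a hidden Markov tree model, for every nonempty subset `Vs`
of the vertex set that induces a subtree (i.e. `Vs` is connected in the tree), the
entropy of the corresponding state subprocess decomposes as
`H(S̄_Vs | X = x) = ∑_{v∈Vs} H(S_v | S_{ρ(v)}, X = x)`, where the term for a vertex
`v` that is the root of the tree or whose parent `ρ(v)` does not belong to `Vs` is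
read as `H(S_v | X = x)`. -/
theorem hmt_induced_subtree_entropy_decomposition
    {J V n : ℕ} [NeZero J] [NeZero n] (M : HMTModel J V n)
    (x : Fin n → Fin V) (hx : 0 < M.pr (obsEq x))
    (Vs : Finset (Fin n)) (hne : Vs.Nonempty)
    (hconn : ∀ a ∈ Vs, ∀ b ∈ Vs, Relation.ReflTransGen
        (fun u v : Fin n => u ∈ Vs ∧ v ∈ Vs ∧
          ((u ≠ 0 ∧ M.parent u = v) ∨ (v ≠ 0 ∧ M.parent v = u))) a b) :
    M.condEnt (M.memVar Vs) (obsEq x)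
      = ∑ v ∈ Vs,
          if v = 0 ∨ M.parent v ∉ Vs
          then M.condEnt (fun s => s v) (obsEq x)
          else M.condEntGiven (fun s => s v) (fun s => s (M.parent v)) (obsEq x) :=
  hmt_induced_subtree_entropy_decomposition_general M x Vs hconn
end

section
/- In a hidden Markov tree model, the posterior joint distribution of a state and its children states factorizes: for every vertex u, every state j with P(S_u = j | X = x) > 0, and every configuration (s_v)_{v∈c(u)} of children states, P(S_u = j, S_{c(u)} = s_{c(u)} | X = x) = P(S_u = j | X = x) Π_{v∈c(u)} P(S_v = s_v | S_u = j, X = x). -/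
open HMTModel

set_option linter.unusedSectionVars false

namespace HMTAux

variable {J V n : ℕ} [NeZero J] [NeZero n]

lemma sub_le {M : HMTModel J V n} {v w : Fin n} (h : M.inSubtree v w) : v ≤ w := by
  induction h with
  | refl => exact le_refl _
  | tail h1 h2 ih => exact le_trans (le_of_lt (h2.2 ▸ M.parent_lt _ h2.1)) ih

lemma sub_step {M : HMTModel J V n} {v w : Fin n} (h : M.inSubtree v w) (hw : w ≠ v) :
    w ≠ 0 ∧ M.inSubtree v (M.parent w) := by
  rcases Relation.ReflTransGen.cases_head h with h' | ⟨c, hc, h'⟩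
  · exact absurd h' hw
  · exact ⟨hc.1, hc.2 ▸ h'⟩

lemma sub_head {M : HMTModel J V n} {v w : Fin n} (hw : w ≠ 0)
    (h : M.inSubtree v (M.parent w)) : M.inSubtree v w :=
  Relation.ReflTransGen.head ⟨hw, rfl⟩ h

lemma sub_refl {M : HMTModel J V n} (v : Fin n) : M.inSubtree v v := Relation.ReflTransGen.refl

lemma sub_ne_zero {M : HMTModel J V n} {v w : Fin n} (hv : v ≠ 0) (h : M.inSubtree v w) :
    w ≠ 0 := by
  rintro rfl
  exact hv (le_antisymm (sub_le h) (Fin.zero_le v))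

lemma not_sub_zero {M : HMTModel J V n} {v : Fin n} (hv : v ≠ 0) : ¬ M.inSubtree v 0 :=
  fun h => (sub_ne_zero hv h) rfl

lemma not_sub_parent {M : HMTModel J V n} {v : Fin n} (hv : v ≠ 0) :
    ¬ M.inSubtree v (M.parent v) :=
  fun h => absurd (sub_le h) (not_le.mpr (M.parent_lt v hv))

open Classical in
/-- The part of the joint law not involving the subtree rooted at `v`. -/
noncomputable def fp (M : HMTModel J V n) (x : Fin n → Fin V) (v : Fin n)
    (s : Fin n → Fin J) : ℝ :=
  M.init (s 0) *
    (∏ w ∈ Finset.univ.filter (fun w : Fin n => w ≠ 0 ∧ ¬ M.inSubtree v w),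
      M.trans (s (M.parent w)) (s w)) *
    ∏ w ∈ Finset.univ.filter (fun w : Fin n => ¬ M.inSubtree v w), M.emit (s w) (x w)

open Classical in
/-- The part of the joint law involving the subtree rooted at `v`. -/
noncomputable def gp (M : HMTModel J V n) (x : Fin n → Fin V) (v : Fin n)
    (s : Fin n → Fin J) : ℝ :=
  (∏ w ∈ Finset.univ.filter (fun w : Fin n => M.inSubtree v w),
      M.trans (s (M.parent w)) (s w)) *
    ∏ w ∈ Finset.univ.filter (fun w : Fin n => M.inSubtree v w), M.emit (s w) (x w)

lemma joint_eq (M : HMTModel J V n) (x : Fin n → Fin V) {v : Fin n} (hv : v ≠ 0)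
    (s : Fin n → Fin J) : M.joint s x = fp M x v s * gp M x v s := by
  classical
  unfold HMTModel.joint fp gp
  rw [← Finset.prod_filter_mul_prod_filter_not Finset.univ (fun w => M.inSubtree v w)
    (fun w => M.emit (s w) (x w)),
    ← Finset.prod_filter_mul_prod_filter_not (Finset.univ.filter (fun w : Fin n => w ≠ 0))
      (fun w => M.inSubtree v w) (fun w => M.trans (s (M.parent w)) (s w)),
    Finset.filter_filter, Finset.filter_filter]
  have h1 : Finset.univ.filter (fun w : Fin n => w ≠ 0 ∧ M.inSubtree v w)
      = Finset.univ.filter (fun w : Fin n => M.inSubtree v w) := by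
    apply Finset.filter_congr
    intro w _
    exact ⟨fun h => h.2, fun h => ⟨sub_ne_zero hv h, h⟩⟩
  rw [h1]
  ring

lemma fp_congr (M : HMTModel J V n) (x : Fin n → Fin V) {v : Fin n} (hv : v ≠ 0)
    {s t : Fin n → Fin J} (hst : ∀ w, ¬ M.inSubtree v w → s w = t w) :
    fp M x v s = fp M x v t := by
  classical
  unfold fp
  have h0 : s 0 = t 0 := hst 0 (not_sub_zero hv)
  have e1 : (∏ w ∈ Finset.univ.filter (fun w : Fin n => w ≠ 0 ∧ ¬ M.inSubtree v w),
      M.trans (s (M.parent w)) (s w))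
      = ∏ w ∈ Finset.univ.filter (fun w : Fin n => w ≠ 0 ∧ ¬ M.inSubtree v w),
      M.trans (t (M.parent w)) (t w) := by
    refine Finset.prod_congr rfl fun w hw => ?_
    simp only [Finset.mem_filter, Finset.mem_univ, true_and] at hw
    rw [hst w hw.2, hst (M.parent w) (fun hp => hw.2 (sub_head hw.1 hp))]
  have e2 : (∏ w ∈ Finset.univ.filter (fun w : Fin n => ¬ M.inSubtree v w),
      M.emit (s w) (x w))
      = ∏ w ∈ Finset.univ.filter (fun w : Fin n => ¬ M.inSubtree v w),
      M.emit (t w) (x w) := by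
    refine Finset.prod_congr rfl fun w hw => ?_
    simp only [Finset.mem_filter, Finset.mem_univ, true_and] at hw
    rw [hst w hw]
  rw [h0, e1, e2]

lemma gp_congr (M : HMTModel J V n) (x : Fin n → Fin V) {u v : Fin n} (hvu : M.parent v = u)
    {s t : Fin n → Fin J} (hst : ∀ w, M.inSubtree v w → s w = t w) (hu : s u = t u) :
    gp M x v s = gp M x v t := by
  classical
  unfold gp
  have e1 : (∏ w ∈ Finset.univ.filter (fun w : Fin n => M.inSubtree v w),
      M.trans (s (M.parent w)) (s w))
      = ∏ w ∈ Finset.univ.filter (fun w : Fin n => M.inSubtree v w),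
      M.trans (t (M.parent w)) (t w) := by
    refine Finset.prod_congr rfl fun w hw => ?_
    simp only [Finset.mem_filter, Finset.mem_univ, true_and] at hw
    by_cases hwv : w = v
    · subst hwv
      rw [hst w hw, hvu, hu]
    · rw [hst w hw, hst (M.parent w) (sub_step hw hwv).2]
  have e2 : (∏ w ∈ Finset.univ.filter (fun w : Fin n => M.inSubtree v w),
      M.emit (s w) (x w))
      = ∏ w ∈ Finset.univ.filter (fun w : Fin n => M.inSubtree v w),
      M.emit (t w) (x w) :=
    Finset.prod_congr rfl fun w hw => by
      simp only [Finset.mem_filter, Finset.mem_univ, true_and] at hw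
      rw [hst w hw]
  rw [e1, e2]

open Classical in
/-- Extension of an assignment on the subtree of `v` by `j` outside. -/
noncomputable def eA (M : HMTModel J V n) (v : Fin n) (j : Fin J)
    (a : {w : Fin n // M.inSubtree v w} → Fin J) : Fin n → Fin J :=
  fun w => if h : M.inSubtree v w then a ⟨w, h⟩ else j

open Classical in
/-- Extension of an assignment off the subtree of `v` by `j` inside. -/
noncomputable def eB (M : HMTModel J V n) (v : Fin n) (j : Fin J)
    (b : {w : Fin n // ¬ M.inSubtree v w} → Fin J) : Fin n → Fin J :=
  fun w => if h : M.inSubtree v w then j else b ⟨w, h⟩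

open Classical in
/-- Sum of the joint law over states satisfying `P`. -/
noncomputable def SF (M : HMTModel J V n) (x : Fin n → Fin V)
    (P : (Fin n → Fin J) → Prop) : ℝ :=
  ∑ s : Fin n → Fin J, if P s then M.joint s x else 0

open Classical in
noncomputable def GA (M : HMTModel J V n) (x : Fin n → Fin V) (v : Fin n) (j : Fin J)
    (Q : (Fin n → Fin J) → Prop) : ℝ :=
  ∑ a : {w : Fin n // M.inSubtree v w} → Fin J,
    if Q (eA M v j a) then gp M x v (eA M v j a) else 0

open Classical in
noncomputable def FB (M : HMTModel J V n) (x : Fin n → Fin V) (v : Fin n) (j : Fin J)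
    (Q : (Fin n → Fin J) → Prop) : ℝ :=
  ∑ b : {w : Fin n // ¬ M.inSubtree v w} → Fin J,
    if Q (eB M v j b) then fp M x v (eB M v j b) else 0

lemma SF_congr (M : HMTModel J V n) (x : Fin n → Fin V)
    {P P' : (Fin n → Fin J) → Prop} (h : ∀ s, P s ↔ P' s) : SF M x P = SF M x P' :=
  congrArg (SF M x) (funext fun s => propext (h s))

open Classical in
lemma split (M : HMTModel J V n) (x : Fin n → Fin V) {u v : Fin n} (j : Fin J)
    (hv : v ≠ 0) (hvu : M.parent v = u)
    (Pa Pb : (Fin n → Fin J) → Prop)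
    (hPa : ∀ s t : Fin n → Fin J, (∀ w, M.inSubtree v w → s w = t w) → Pa s → Pa t)
    (hPb : ∀ s t : Fin n → Fin J, (∀ w, ¬ M.inSubtree v w → s w = t w) → Pb s → Pb t) :
    SF M x (fun s => s u = j ∧ Pa s ∧ Pb s)
      = GA M x v j Pa * FB M x v j (fun s => s u = j ∧ Pb s) := by
  classical
  unfold SF GA FB
  beta_reduce
  rw [Finset.sum_mul_sum]
  refine Eq.trans (Equiv.sum_comp (Equiv.piEquivPiSubtypeProd (fun w => M.inSubtree v w)
      (fun _ => Fin J)).symm _).symm ?_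
  rw [Fintype.sum_prod_type]
  refine Finset.sum_congr rfl fun a _ => Finset.sum_congr rfl fun b _ => ?_
  set s : Fin n → Fin J :=
    (Equiv.piEquivPiSubtypeProd (fun w => M.inSubtree v w) (fun _ => Fin J)).symm (a, b) with hs
  have hsw : ∀ w : Fin n, s w = if h : M.inSubtree v w then a ⟨w, h⟩ else b ⟨w, h⟩ := by
    intro w
    rw [hs]
    exact Equiv.piEquivPiSubtypeProd_symm_apply (fun w => M.inSubtree v w)
      (fun _ => Fin J) (a, b) w
  have hPu : ¬ M.inSubtree v u := hvu ▸ not_sub_parent hv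
  have hsA : ∀ w, M.inSubtree v w → s w = eA M v j a w := by
    intro w hw; rw [hsw w, eA, dif_pos hw, dif_pos hw]
  have hsB : ∀ w, ¬ M.inSubtree v w → s w = eB M v j b w := by
    intro w hw; rw [hsw w, eB, dif_neg hw, dif_neg hw]
  have hu_eB : eB M v j b u = s u := (hsB u hPu).symm
  by_cases h1 : s u = j
  · have hAu : s u = eA M v j a u := by rw [h1, eA, dif_neg hPu]
    have hg : gp M x v s = gp M x v (eA M v j a) := gp_congr M x hvu hsA hAu
    have hf : fp M x v s = fp M x v (eB M v j b) := fp_congr M x hv hsB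
    have hPaiff : Pa s ↔ Pa (eA M v j a) :=
      ⟨hPa s _ hsA, hPa _ s fun w hw => (hsA w hw).symm⟩
    have hPbiff : Pb s ↔ Pb (eB M v j b) :=
      ⟨hPb s _ hsB, hPb _ s fun w hw => (hsB w hw).symm⟩
    have hcond : (s u = j ∧ Pa s ∧ Pb s) ↔
        (Pa (eA M v j a)) ∧ (eB M v j b u = j ∧ Pb (eB M v j b)) := by
      rw [hu_eB, ← hPaiff, ← hPbiff]
      constructor
      · rintro ⟨hx1, hx2, hx3⟩; exact ⟨hx2, hx1, hx3⟩
      · rintro ⟨hx2, hx1, hx3⟩; exact ⟨hx1, hx2, hx3⟩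
    have hjj : M.joint s x = gp M x v (eA M v j a) * fp M x v (eB M v j b) := by
      rw [joint_eq M x hv s, hf, hg]; ring
    by_cases hA : Pa (eA M v j a)
    · by_cases hB : eB M v j b u = j ∧ Pb (eB M v j b)
      · rw [if_pos hA, if_pos hB, if_pos (hcond.mpr ⟨hA, hB⟩), hjj]
      · rw [if_neg hB, mul_zero, if_neg (fun h => hB (hcond.mp h).2)]
    · rw [if_neg hA, zero_mul, if_neg (fun h => hA (hcond.mp h).1)]
  · have hBne : ¬ (eB M v j b u = j ∧ Pb (eB M v j b)) := fun h => h1 (hu_eB ▸ h.1)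
    have hCne : ¬ (s u = j ∧ Pa s ∧ Pb s) := fun h => h1 h.1
    rw [if_neg hBne, mul_zero, if_neg hCne]

noncomputable def AA (M : HMTModel J V n) (x : Fin n → Fin V) (u : Fin n) (j : Fin J)
    (σ : Fin n → Fin J) (S : Finset (Fin n)) : ℝ :=
  SF M x (fun s => s u = j ∧ ∀ w ∈ S, s w = σ w)

noncomputable def TT (M : HMTModel J V n) (x : Fin n → Fin V) (u : Fin n) (j : Fin J) : ℝ :=
  SF M x (fun s => s u = j)

lemma AA_empty (M : HMTModel J V n) (x : Fin n → Fin V) (u : Fin n) (j : Fin J)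
    (σ : Fin n → Fin J) : AA M x u j σ ∅ = TT M x u j :=
  SF_congr M x fun s => by simp

lemma AA_step (M : HMTModel J V n) (x : Fin n → Fin V) {u v : Fin n} (j : Fin J)
    (σ : Fin n → Fin J) (hv : v ≠ 0) (hvu : M.parent v = u)
    (S : Finset (Fin n)) (hS : ∀ w ∈ S, w ≠ 0 ∧ M.parent w = u) (hvS : v ∉ S) :
    AA M x u j σ (insert v S) * TT M x u j = AA M x u j σ {v} * AA M x u j σ S := by
  have hPa : ∀ s t : Fin n → Fin J, (∀ w, M.inSubtree v w → s w = t w) →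
      s v = σ v → t v = σ v := fun s t h hs => (h v (sub_refl v)) ▸ hs
  have hPb : ∀ s t : Fin n → Fin J, (∀ w, ¬ M.inSubtree v w → s w = t w) →
      (∀ w ∈ S, s w = σ w) → ∀ w ∈ S, t w = σ w := by
    intro s t h hs w hw
    have hns : ¬ M.inSubtree v w := by
      intro hsub
      by_cases hwv : w = v
      · exact hvS (hwv ▸ hw)
      · have h2 := (sub_step hsub hwv).2
        rw [(hS w hw).2, ← hvu] at h2
        exact not_sub_parent hv h2
    exact (h w hns) ▸ hs w hw
  have hTa : ∀ s t : Fin n → Fin J, (∀ w, M.inSubtree v w → s w = t w) →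
      True → True := fun _ _ _ _ => trivial
  have hTb : ∀ s t : Fin n → Fin J, (∀ w, ¬ M.inSubtree v w → s w = t w) →
      True → True := fun _ _ _ _ => trivial
  have e1 := split M x j hv hvu (fun s => s v = σ v) (fun s => ∀ w ∈ S, s w = σ w) hPa hPb
  have e2 := split M x j hv hvu (fun _ => True) (fun _ => True) hTa hTb
  have e3 := split M x j hv hvu (fun s => s v = σ v) (fun _ => True) hPa hTb
  have e4 := split M x j hv hvu (fun _ => True) (fun s => ∀ w ∈ S, s w = σ w) hTa hPb
  have c1 : AA M x u j σ (insert v S)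
      = SF M x (fun s => s u = j ∧ (fun s => s v = σ v) s ∧ (fun s => ∀ w ∈ S, s w = σ w) s) :=
    SF_congr M x fun s => by rw [Finset.forall_mem_insert]
  have c2 : TT M x u j
      = SF M x (fun s => s u = j ∧ (fun _ => True) s ∧ (fun _ => True) s) :=
    SF_congr M x fun s => by tauto
  have c3 : AA M x u j σ {v}
      = SF M x (fun s => s u = j ∧ (fun s => s v = σ v) s ∧ (fun _ => True) s) :=
    SF_congr M x fun s => by simp
  have c4 : AA M x u j σ S
      = SF M x (fun s => s u = j ∧ (fun _ => True) s ∧ (fun s => ∀ w ∈ S, s w = σ w) s) :=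
    SF_congr M x fun s => by tauto
  rw [c1, c2, c3, c4, e1, e2, e3, e4]
  ring

lemma AA_prod (M : HMTModel J V n) (x : Fin n → Fin V) (u : Fin n) (j : Fin J)
    (σ : Fin n → Fin J) (S : Finset (Fin n)) (hS : ∀ w ∈ S, w ≠ 0 ∧ M.parent w = u) :
    AA M x u j σ S * ∏ _w ∈ S, TT M x u j
      = TT M x u j * ∏ w ∈ S, AA M x u j σ {w} := by
  classical
  induction S using Finset.induction_on with
  | empty => simp [AA_empty]
  | @insert a S ha ih =>
    have haC := hS a (Finset.mem_insert_self a S)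
    have hstep := AA_step M x j σ haC.1 haC.2 S
      (fun w hw => hS w (Finset.mem_insert_of_mem hw)) ha
    have ih' := ih fun w hw => hS w (Finset.mem_insert_of_mem hw)
    rw [Finset.prod_insert ha, Finset.prod_insert ha]
    calc AA M x u j σ (insert a S) * (TT M x u j * ∏ _w ∈ S, TT M x u j)
        = (AA M x u j σ (insert a S) * TT M x u j) * ∏ _w ∈ S, TT M x u j := by ring
      _ = (AA M x u j σ {a} * AA M x u j σ S) * ∏ _w ∈ S, TT M x u j := by rw [hstep]
      _ = AA M x u j σ {a} * (AA M x u j σ S * ∏ _w ∈ S, TT M x u j) := by ring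
      _ = AA M x u j σ {a} * (TT M x u j * ∏ w ∈ S, AA M x u j σ {w}) := by rw [ih']
      _ = TT M x u j * (AA M x u j σ {a} * ∏ w ∈ S, AA M x u j σ {w}) := by ring

lemma pr_congr (M : HMTModel J V n)
    (E E' : (Fin n → Fin J) → (Fin n → Fin V) → Prop) (h : ∀ s y, E s y ↔ E' s y) :
    M.pr E = M.pr E' := by
  have : E = E' := funext fun s => funext fun y => propext (h s y)
  rw [this]

open Classical in
lemma pr_and_obs (M : HMTModel J V n) (x : Fin n → Fin V) (P : (Fin n → Fin J) → Prop) :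
    M.pr (fun s y => P s ∧ y = x) = SF M x P := by
  classical
  unfold HMTModel.pr SF
  refine Finset.sum_congr rfl fun s _ => ?_
  rw [Finset.sum_eq_single x (fun y _ hy => by
      rw [if_neg (fun hc : P s ∧ y = x => hy hc.2)])
    (by simp)]
  by_cases h : P s
  · rw [if_pos ⟨h, rfl⟩, if_pos h]
  · rw [if_neg (fun hc : P s ∧ x = x => h hc.1), if_neg h]

end HMTAux

open HMTAux

/-- In a hidden Markov tree model, the posterior joint distribution
of a state and its children states factorizes: for every vertex `u`, every state `j`
with `P(S_u = j | X = x) > 0`, and every configuration `(σ_v)_{v∈c(u)}` of children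
states,
`P(S_u = j, S_{c(u)} = σ_{c(u)} | X = x)
   = P(S_u = j | X = x) ∏_{v∈c(u)} P(S_v = σ_v | S_u = j, X = x)`. -/
theorem hmt_posterior_children_factorization
    {J V n : ℕ} [NeZero J] [NeZero n] (M : HMTModel J V n)
    (x : Fin n → Fin V) (hx : 0 < M.pr (obsEq x))
    (u : Fin n) (j : Fin J)
    (hj : 0 < M.cpr (fun s _ => s u = j) (obsEq x))
    (σ : Fin n → Fin J) :
    M.cpr (fun s _ => s u = j ∧ ∀ v : Fin n, v ≠ 0 → M.parent v = u → s v = σ v)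
        (obsEq x)
      = M.cpr (fun s _ => s u = j) (obsEq x) *
          ∏ v ∈ Finset.univ.filter (fun v : Fin n => v ≠ 0 ∧ M.parent v = u),
            M.cpr (fun s _ => s v = σ v) (fun s y => s u = j ∧ y = x) := by
  classical
  set C : Finset (Fin n) := Finset.univ.filter (fun v : Fin n => v ≠ 0 ∧ M.parent v = u)
    with hC
  have hSu : M.cpr (fun s _ => s u = j) (obsEq x) = TT M x u j / M.pr (obsEq x) := by
    unfold HMTModel.cpr
    rw [if_pos hx]
    congr 1
    exact Eq.trans (pr_congr M _ (fun s y => (s u = j) ∧ y = x) (fun s y => Iff.rfl))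
      (pr_and_obs M x _)
  have hTpos : 0 < TT M x u j := by
    rw [hSu] at hj
    have h2 := mul_pos hj hx
    rwa [div_mul_cancel₀ _ (ne_of_gt hx)] at h2
  have hLHS : M.cpr (fun s _ => s u = j ∧ ∀ v : Fin n, v ≠ 0 → M.parent v = u → s v = σ v)
      (obsEq x) = AA M x u j σ C / M.pr (obsEq x) := by
    unfold HMTModel.cpr
    rw [if_pos hx]
    congr 1
    refine Eq.trans (pr_congr M _
      (fun s y => (s u = j ∧ ∀ v : Fin n, v ≠ 0 → M.parent v = u → s v = σ v) ∧ y = x)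
      (fun s y => Iff.rfl)) (Eq.trans (pr_and_obs M x _) (SF_congr M x fun s => ?_))
    simp only [hC, Finset.mem_filter, Finset.mem_univ, true_and, and_imp]
  have hfac : ∀ v ∈ C, M.cpr (fun s _ => s v = σ v) (fun s y => s u = j ∧ y = x)
      = AA M x u j σ {v} / TT M x u j := by
    intro v hv'
    have hB : M.pr (fun s y => s u = j ∧ y = x) = TT M x u j := pr_and_obs M x _
    unfold HMTModel.cpr
    rw [hB, if_pos hTpos]
    congr 1
    refine Eq.trans (pr_congr M _
      (fun s y => (s u = j ∧ s v = σ v) ∧ y = x)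
      (fun s y => by tauto)) (Eq.trans (pr_and_obs M x _) (SF_congr M x fun s => ?_))
    simp
  rw [hLHS, hSu, Finset.prod_congr rfl hfac]
  have hprod := AA_prod M x u j σ C (fun w hw => (Finset.mem_filter.mp hw).2)
  rw [Finset.prod_const] at hprod
  rw [Finset.prod_div_distrib, Finset.prod_const, div_mul_div_comm, ← hprod,
    mul_div_mul_right _ _ (pow_ne_zero _ (ne_of_gt hTpos))]
end
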